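/- arXiv:2305.18765 — 4 statements merged into one kernel-verified Lean document; each statement's English description precedes it below -/
import Mathlib

section
/- Assume f(k,a)=f(k,b)=0 for all k∈[α,β]. There exist constants K₂,K₃,K₄≥0, depending only on a,b,α,β,κ,c₂, the C¹ norm of f, the C² norm of S and the C¹ norm of Q, such that the following holds: for every λ∈(0,c₂] with λ‖∂_u f‖≤1−κ, all k₋,k₊,k♯∈[α,β] and u₋,u₊∈[a,b], setting u♯=½(u₋+u₊)−(λ/2)(f(k₊,u₊)−f(k₋,u₋)) and Ψ=S(k♯,u♯)−½(S(k₋,u₋)+S(k₊,u₊))+(λ/2)(Q(k₊,u₊)−Q(k₋,u₋)), one has |Ψ| ≤ K₂(u₊−u₋)² + K₃|k₊−k₋| + K₄|k♯−½(k₋+k₊)|. No convexity of S is required. -/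
/-!
Freeze `k` at `k̄ = (k₋ + k₊) / 2`. Expanding `S(k̄, ·)` to second order about `ū = (u₋ + u₊) / 2`,
the first-order terms cancel because `∂ᵤQ = ∂ᵤS · ∂ᵤf`, and the CFL condition `λ ‖∂ᵤf‖ ≤ 1` keeps the
shifted midpoint within `|u₊ - u₋| / 2` of `ū`, so only an `O((u₊ - u₋)²)` remainder is left.
Moving `k̄` back to `k₋, k₊, k♯` costs Lipschitz-in-`k` terms, evaluated at the update `u♯`, which
stays in `[a, b]` because `f` vanishes at `a` and `b`.
-/

open Set

theorem Convex.abs_sub_le_of_hasDerivAt {g g' : ℝ → ℝ} {s : Set ℝ} {C x y : ℝ}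
    (hs : Convex ℝ s) (hg : ∀ z ∈ s, HasDerivAt g (g' z) z) (hC : ∀ z ∈ s, |g' z| ≤ C)
    (hx : x ∈ s) (hy : y ∈ s) :
    |g y - g x| ≤ C * |y - x| := by
  simpa only [Real.norm_eq_abs] using
    hs.norm_image_sub_le_of_norm_hasDerivWithin_le (fun z hz => (hg z hz).hasDerivWithinAt)
      (fun z hz => by simpa only [Real.norm_eq_abs] using hC z hz) hx hy

theorem mem_uIcc_iff_abs_sub_add_div_two_le {x y v : ℝ} :
    v ∈ uIcc x y ↔ |v - (x + y) / 2| ≤ |y - x| / 2 := by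
  rcases le_total x y with h | h
  · rw [uIcc_of_le h, abs_of_nonneg (sub_nonneg.2 h), abs_le, mem_Icc]
    constructor <;> rintro ⟨h₁, h₂⟩ <;> constructor <;> linarith
  · rw [uIcc_of_ge h, abs_of_nonpos (sub_nonpos.2 h), abs_le, mem_Icc]
    constructor <;> rintro ⟨h₁, h₂⟩ <;> constructor <;> linarith

theorem add_div_two_mem_Icc {a b x y : ℝ} (hx : x ∈ Icc a b) (hy : y ∈ Icc a b) :
    (x + y) / 2 ∈ Icc a b :=
  ⟨by linarith [hx.1, hy.1], by linarith [hx.2, hy.2]⟩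

theorem abs_sub_sub_mul_le_of_hasDerivAt {g g' g'' : ℝ → ℝ} {a b C x y : ℝ}
    (hg : ∀ z ∈ Icc a b, HasDerivAt g (g' z) z) (hg' : ∀ z ∈ Icc a b, HasDerivAt g' (g'' z) z)
    (hC : ∀ z ∈ Icc a b, |g'' z| ≤ C) (hx : x ∈ Icc a b) (hy : y ∈ Icc a b) :
    |g y - g x - g' x * (y - x)| ≤ C * (y - x) ^ 2 := by
  have hsub := uIcc_subset_Icc hx hy
  have hC0 : 0 ≤ C := (abs_nonneg _).trans (hC x hx)
  have hslope : ∀ z ∈ uIcc x y, |g' z - g' x| ≤ C * |y - x| := fun z hz =>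
    ((convex_Icc a b).abs_sub_le_of_hasDerivAt hg' hC hx (hsub hz)).trans
      (mul_le_mul_of_nonneg_left (abs_sub_left_of_mem_uIcc hz) hC0)
  have hlin := (convex_uIcc x y).abs_sub_le_of_hasDerivAt (g := fun z => g z - g' x * z)
    (fun z hz => ((hg z (hsub hz)).sub ((hasDerivAt_id' z).const_mul (g' x))).congr_deriv
      (by ring)) hslope left_mem_uIcc right_mem_uIcc
  calc |g y - g x - g' x * (y - x)| = |(g y - g' x * y) - (g x - g' x * x)| := by ring_nf
    _ ≤ C * |y - x| * |y - x| := hlin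
    _ = C * (y - x) ^ 2 := by rw [mul_assoc, abs_mul_abs_self, sq]

theorem abs_sub_apply_add_div_two_le {g : ℝ → ℝ} {s : Set ℝ} {M k₁ k₂ : ℝ}
    (hg : ∀ k ∈ s, ∀ k' ∈ s, |g k' - g k| ≤ M * |k' - k|) (hk₁ : k₁ ∈ s) (hk₂ : k₂ ∈ s)
    (hmid : (k₁ + k₂) / 2 ∈ s) :
    |g k₁ - g ((k₁ + k₂) / 2)| ≤ M * |k₂ - k₁| / 2 ∧
      |g k₂ - g ((k₁ + k₂) / 2)| ≤ M * |k₂ - k₁| / 2 := by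
  constructor
  · refine (hg _ hmid _ hk₁).trans_eq ?_
    rw [show k₁ - (k₁ + k₂) / 2 = -((k₂ - k₁) / 2) by ring, abs_neg, abs_div, abs_two]
    ring
  · refine (hg _ hmid _ hk₂).trans_eq ?_
    rw [show k₂ - (k₁ + k₂) / 2 = (k₂ - k₁) / 2 by ring, abs_div, abs_two]
    ring

section Rectangle

variable {g g' : ℝ → ℝ → ℝ} {α β a b C : ℝ}

theorem abs_sub_le_of_hasDerivAt_fst
    (hg : ∀ k ∈ Icc α β, ∀ u ∈ Icc a b, HasDerivAt (fun w => g w u) (g' k u) k)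
    (hC : ∀ k ∈ Icc α β, ∀ u ∈ Icc a b, |g' k u| ≤ C) :
    ∀ u ∈ Icc a b, ∀ k ∈ Icc α β, ∀ k' ∈ Icc α β, |g k' u - g k u| ≤ C * |k' - k| :=
  fun u hu _ hk _ hk' => (convex_Icc α β).abs_sub_le_of_hasDerivAt
    (fun w hw => hg w hw u hu) (fun w hw => hC w hw u hu) hk hk'

theorem abs_sub_le_of_hasDerivAt_snd
    (hg : ∀ k ∈ Icc α β, ∀ u ∈ Icc a b, HasDerivAt (fun v => g k v) (g' k u) u)
    (hC : ∀ k ∈ Icc α β, ∀ u ∈ Icc a b, |g' k u| ≤ C) :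
    ∀ k ∈ Icc α β, ∀ u ∈ Icc a b, ∀ v ∈ Icc a b, |g k v - g k u| ≤ C * |v - u| :=
  fun k hk _ hu _ hv => (convex_Icc a b).abs_sub_le_of_hasDerivAt (hg k hk) (hC k hk) hu hv

end Rectangle

theorem laxFriedrichs_mem_Icc {f : ℝ → ℝ → ℝ} {α β a b L lam k₁ k₂ u₁ u₂ : ℝ}
    (hf0 : ∀ k ∈ Icc α β, f k a = 0 ∧ f k b = 0)
    (hfL : ∀ k ∈ Icc α β, ∀ u ∈ Icc a b, ∀ v ∈ Icc a b, |f k v - f k u| ≤ L * |v - u|)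
    (hlam : 0 ≤ lam) (hlamL : lam * L ≤ 1) (hk₁ : k₁ ∈ Icc α β) (hk₂ : k₂ ∈ Icc α β)
    (hu₁ : u₁ ∈ Icc a b) (hu₂ : u₂ ∈ Icc a b) :
    (u₁ + u₂) / 2 - lam / 2 * (f k₂ u₂ - f k₁ u₁) ∈ Icc a b := by
  have hab : a ≤ b := hu₁.1.trans hu₁.2
  have hstep : ∀ k ∈ Icc α β, ∀ u ∈ Icc a b, |lam * f k u| ≤ u - a ∧ |lam * f k u| ≤ b - u := by
    intro k hk u hu
    have hdist : ∀ c ∈ Icc a b, f k c = 0 → |lam * f k u| ≤ |u - c| := fun c hc h0 =>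
      calc |lam * f k u| = lam * |f k u - f k c| := by rw [h0, sub_zero, abs_mul, abs_of_nonneg hlam]
        _ ≤ lam * (L * |u - c|) := mul_le_mul_of_nonneg_left (hfL k hk c hc u hu) hlam
        _ = lam * L * |u - c| := by ring
        _ ≤ |u - c| := mul_le_of_le_one_left (abs_nonneg _) hlamL
    constructor
    · simpa [abs_of_nonneg (sub_nonneg.2 hu.1)] using hdist a (left_mem_Icc.2 hab) (hf0 k hk).1
    · simpa [abs_of_nonpos (sub_nonpos.2 hu.2)] using hdist b (right_mem_Icc.2 hab) (hf0 k hk).2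
  obtain ⟨h₁a, h₁b⟩ := hstep k₁ hk₁ u₁ hu₁
  obtain ⟨h₂a, h₂b⟩ := hstep k₂ hk₂ u₂ hu₂
  rw [abs_le] at h₁a h₁b h₂a h₂b
  constructor <;> linarith [h₁a.1, h₁b.2, h₂a.1, h₂b.2]

noncomputable def entropyDefect (S Q f : ℝ → ℝ → ℝ) (lam km kp ks um up : ℝ) : ℝ :=
  S ks ((um + up) / 2 - lam / 2 * (f kp up - f km um)) - (S km um + S kp up) / 2
    + lam / 2 * (Q kp up - Q km um)

theorem abs_entropyDefect_diag_le {S Q f : ℝ → ℝ → ℝ} {σ τ φ' : ℝ → ℝ} {a b k lam M L u₁ u₂ : ℝ}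
    (hS : ∀ u ∈ Icc a b, HasDerivAt (S k) (σ u) u) (hσ : ∀ u ∈ Icc a b, HasDerivAt σ (τ u) u)
    (hf : ∀ u ∈ Icc a b, HasDerivAt (f k) (φ' u) u)
    (hQ : ∀ u ∈ Icc a b, HasDerivAt (Q k) (σ u * φ' u) u)
    (hτ : ∀ u ∈ Icc a b, |τ u| ≤ M) (hφ' : ∀ u ∈ Icc a b, |φ' u| ≤ L)
    (hlam : 0 ≤ lam) (hlamL : lam * L ≤ 1) (hu₁ : u₁ ∈ Icc a b) (hu₂ : u₂ ∈ Icc a b) :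
    |entropyDefect S Q f lam k k k u₁ u₂| ≤ 3 * M / 4 * (u₂ - u₁) ^ 2 := by
  set ū := (u₁ + u₂) / 2 with hū_def
  set ũ := ū - lam / 2 * (f k u₂ - f k u₁) with hũ_def
  have hsub := uIcc_subset_Icc hu₁ hu₂
  have hū : ū ∈ Icc a b := add_div_two_mem_Icc hu₁ hu₂
  have hM : 0 ≤ M := (abs_nonneg _).trans (hτ u₁ hu₁)
  have hshift : |ũ - ū| ≤ |u₂ - u₁| / 2 := by
    rw [show ũ - ū = -(lam / 2 * (f k u₂ - f k u₁)) by ring, abs_neg, abs_mul,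
      abs_of_nonneg (by positivity)]
    calc lam / 2 * |f k u₂ - f k u₁| ≤ lam / 2 * (L * |u₂ - u₁|) :=
          mul_le_mul_of_nonneg_left
            ((convex_Icc a b).abs_sub_le_of_hasDerivAt hf hφ' hu₁ hu₂) (by positivity)
      _ = lam * L * (|u₂ - u₁| / 2) := by ring
      _ ≤ |u₂ - u₁| / 2 := mul_le_of_le_one_left (by positivity) hlamL
  have hũ : ũ ∈ Icc a b := hsub (mem_uIcc_iff_abs_sub_add_div_two_le.2 hshift)
  have hR : ∀ y ∈ Icc a b, |y - ū| ≤ |u₂ - u₁| / 2 →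
      |S k y - S k ū - σ ū * (y - ū)| ≤ M / 4 * (u₂ - u₁) ^ 2 := fun y hy hyū =>
    calc |S k y - S k ū - σ ū * (y - ū)| ≤ M * (y - ū) ^ 2 :=
          abs_sub_sub_mul_le_of_hasDerivAt hS hσ hτ hū hy
      _ ≤ M * ((u₂ - u₁) / 2) ^ 2 := by
          refine mul_le_mul_of_nonneg_left (sq_le_sq.2 ?_) hM
          rwa [abs_div, abs_two]
      _ = M / 4 * (u₂ - u₁) ^ 2 := by ring
  have hR₀ := hR ũ hũ hshift
  have hR₁ := hR u₁ hu₁ (mem_uIcc_iff_abs_sub_add_div_two_le.1 left_mem_uIcc)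
  have hR₂ := hR u₂ hu₂ (mem_uIcc_iff_abs_sub_add_div_two_le.1 right_mem_uIcc)
  -- the entropy-flux relation `Q' = S' f'` makes `Q - S'(ū) f` flat to first order at `ū`
  have hflux : |(Q k u₂ - σ ū * f k u₂) - (Q k u₁ - σ ū * f k u₁)|
      ≤ M * (|u₂ - u₁| / 2) * L * |u₂ - u₁| :=
    (convex_uIcc u₁ u₂).abs_sub_le_of_hasDerivAt (g := fun v => Q k v - σ ū * f k v)
      (g' := fun v => (σ v - σ ū) * φ' v)
      (fun v hv => ((hQ v (hsub hv)).sub ((hf v (hsub hv)).const_mul (σ ū))).congr_deriv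
        (by ring))
      (fun v hv => by
        rw [abs_mul]
        refine mul_le_mul ?_ (hφ' v (hsub hv)) (abs_nonneg _) (by positivity)
        exact ((convex_Icc a b).abs_sub_le_of_hasDerivAt hσ hτ hū (hsub hv)).trans
          (mul_le_mul_of_nonneg_left (mem_uIcc_iff_abs_sub_add_div_two_le.1 hv) hM))
      left_mem_uIcc right_mem_uIcc
  have hR₃ : |lam / 2 * ((Q k u₂ - σ ū * f k u₂) - (Q k u₁ - σ ū * f k u₁))|
      ≤ M / 4 * (u₂ - u₁) ^ 2 := by
    rw [abs_mul, abs_of_nonneg (by positivity)]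
    calc _ ≤ lam / 2 * (M * (|u₂ - u₁| / 2) * L * |u₂ - u₁|) := by gcongr
      _ = lam * L * (M / 4 * (u₂ - u₁) ^ 2) := by rw [← sq_abs (u₂ - u₁)]; ring
      _ ≤ M / 4 * (u₂ - u₁) ^ 2 := mul_le_of_le_one_left (by positivity) hlamL
  -- the first-order terms cancel since `u₁ + u₂ = 2 ū`
  have hsplit : entropyDefect S Q f lam k k k u₁ u₂
      = (S k ũ - S k ū - σ ū * (ũ - ū)) - (S k u₁ - S k ū - σ ū * (u₁ - ū)) / 2
        - (S k u₂ - S k ū - σ ū * (u₂ - ū)) / 2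
        + lam / 2 * ((Q k u₂ - σ ū * f k u₂) - (Q k u₁ - σ ū * f k u₁)) := by
    rw [hũ_def, hū_def, entropyDefect]; ring
  rw [abs_le] at hR₀ hR₁ hR₂ hR₃
  rw [hsplit, abs_le]
  constructor <;> linarith [hR₀.1, hR₀.2, hR₁.1, hR₁.2, hR₂.1, hR₂.2, hR₃.1, hR₃.2]

theorem abs_entropyDefect_sub_diag_le {S Q f : ℝ → ℝ → ℝ} {α β a b M c lam km kp ks um up : ℝ}
    (hSk : ∀ u ∈ Icc a b, ∀ k ∈ Icc α β, ∀ k' ∈ Icc α β, |S k' u - S k u| ≤ M * |k' - k|)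
    (hQk : ∀ u ∈ Icc a b, ∀ k ∈ Icc α β, ∀ k' ∈ Icc α β, |Q k' u - Q k u| ≤ M * |k' - k|)
    (hfk : ∀ u ∈ Icc a b, ∀ k ∈ Icc α β, ∀ k' ∈ Icc α β, |f k' u - f k u| ≤ M * |k' - k|)
    (hSu : ∀ k ∈ Icc α β, ∀ u ∈ Icc a b, ∀ v ∈ Icc a b, |S k v - S k u| ≤ M * |v - u|)
    (hmem : ∀ k₁ ∈ Icc α β, ∀ k₂ ∈ Icc α β,
      (um + up) / 2 - lam / 2 * (f k₂ up - f k₁ um) ∈ Icc a b)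
    (hM : 0 ≤ M) (hlam : 0 ≤ lam) (hlamc : lam ≤ c)
    (hkm : km ∈ Icc α β) (hkp : kp ∈ Icc α β) (hks : ks ∈ Icc α β)
    (hum : um ∈ Icc a b) (hup : up ∈ Icc a b) :
    |entropyDefect S Q f lam km kp ks um up
        - entropyDefect S Q f lam ((km + kp) / 2) ((km + kp) / 2) ((km + kp) / 2) um up|
      ≤ M * (1 + c + c * M) / 2 * |kp - km| + M * |ks - (km + kp) / 2| := by
  set kb := (km + kp) / 2
  have hkb : kb ∈ Icc α β := add_div_two_mem_Icc hkm hkp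
  have hhalf := fun (g : ℝ → ℝ → ℝ) (hg : ∀ u ∈ Icc a b, ∀ k ∈ Icc α β, ∀ k' ∈ Icc α β,
      |g k' u - g k u| ≤ M * |k' - k|) (u : ℝ) (hu : u ∈ Icc a b) =>
    abs_sub_apply_add_div_two_le (g := fun k => g k u) (hg u hu) hkm hkp hkb
  obtain ⟨hSm, -⟩ := hhalf S hSk um hum
  obtain ⟨-, hSp⟩ := hhalf S hSk up hup
  obtain ⟨hQm, -⟩ := hhalf Q hQk um hum
  obtain ⟨-, hQp⟩ := hhalf Q hQk up hup
  obtain ⟨hfm, -⟩ := hhalf f hfk um hum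
  obtain ⟨-, hfp⟩ := hhalf f hfk up hup
  set us := (um + up) / 2 - lam / 2 * (f kp up - f km um) with hus_def
  set ut := (um + up) / 2 - lam / 2 * (f kb up - f kb um) with hut_def
  have hus : us ∈ Icc a b := hmem km hkm kp hkp
  have hut : ut ∈ Icc a b := hmem kb hkb kb hkb
  have hshift : |us - ut| ≤ lam / 2 * (M * |kp - km|) := by
    rw [show us - ut = -(lam / 2 * ((f kp up - f kb up) - (f km um - f kb um))) by ring,
      abs_neg, abs_mul, abs_of_nonneg (by positivity)]
    gcongr
    exact (abs_sub _ _).trans (by linarith)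
  have hT₁ : |S ks us - S kb us| ≤ M * |ks - kb| := hSk us hus kb hkb ks hks
  have hT₂ : |S kb us - S kb ut| ≤ c * M ^ 2 / 2 * |kp - km| :=
    calc |S kb us - S kb ut| ≤ M * |us - ut| := hSu kb hkb ut hut us hus
      _ ≤ M * (lam / 2 * (M * |kp - km|)) := by gcongr
      _ ≤ M * (c / 2 * (M * |kp - km|)) := by gcongr
      _ = c * M ^ 2 / 2 * |kp - km| := by ring
  have hT₃ : |((S km um - S kb um) + (S kp up - S kb up)) / 2| ≤ M / 2 * |kp - km| := by
    rw [abs_div, abs_two]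
    linarith [abs_add_le (S km um - S kb um) (S kp up - S kb up)]
  have hT₄ : |lam / 2 * ((Q kp up - Q kb up) - (Q km um - Q kb um))| ≤ c * M / 2 * |kp - km| := by
    rw [abs_mul, abs_of_nonneg (by positivity)]
    calc _ ≤ lam / 2 * (M * |kp - km|) := by
          gcongr
          exact (abs_sub _ _).trans (by linarith)
      _ ≤ c / 2 * (M * |kp - km|) := by gcongr
      _ = c * M / 2 * |kp - km| := by ring
  have hsplit : entropyDefect S Q f lam km kp ks um up - entropyDefect S Q f lam kb kb kb um up
      = (S ks us - S kb us) + (S kb us - S kb ut)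
        - ((S km um - S kb um) + (S kp up - S kb up)) / 2
        + lam / 2 * ((Q kp up - Q kb up) - (Q km um - Q kb um)) := by
    rw [hus_def, hut_def, entropyDefect, entropyDefect]; ring
  rw [abs_le] at hT₁ hT₂ hT₃ hT₄
  rw [hsplit, abs_le]
  constructor <;> linarith [hT₁.1, hT₁.2, hT₂.1, hT₂.2, hT₃.1, hT₃.2, hT₄.1, hT₄.2]

theorem stmt5_general
    (α β a b : ℝ)
    (f S Q fu fk Su Sk Suu Qu Qk : ℝ → ℝ → ℝ)
    (hfu : ∀ k ∈ Set.Icc α β, ∀ u ∈ Set.Icc a b, HasDerivAt (fun v => f k v) (fu k u) u)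
    (hfk : ∀ k ∈ Set.Icc α β, ∀ u ∈ Set.Icc a b, HasDerivAt (fun w => f w u) (fk k u) k)
    (hSu : ∀ k ∈ Set.Icc α β, ∀ u ∈ Set.Icc a b, HasDerivAt (fun v => S k v) (Su k u) u)
    (hSk : ∀ k ∈ Set.Icc α β, ∀ u ∈ Set.Icc a b, HasDerivAt (fun w => S w u) (Sk k u) k)
    (hSuu : ∀ k ∈ Set.Icc α β, ∀ u ∈ Set.Icc a b, HasDerivAt (fun v => Su k v) (Suu k u) u)
    (hQu : ∀ k ∈ Set.Icc α β, ∀ u ∈ Set.Icc a b, HasDerivAt (fun v => Q k v) (Qu k u) u)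
    (hQk : ∀ k ∈ Set.Icc α β, ∀ u ∈ Set.Icc a b, HasDerivAt (fun w => Q w u) (Qk k u) k)
    (hent : ∀ k ∈ Set.Icc α β, ∀ u ∈ Set.Icc a b, Qu k u = Su k u * fu k u)
    (M Mfu : ℝ)
    (hM : ∀ k ∈ Set.Icc α β, ∀ u ∈ Set.Icc a b,
      |f k u| ≤ M ∧ |fu k u| ≤ M ∧ |fk k u| ≤ M ∧
      |S k u| ≤ M ∧ |Su k u| ≤ M ∧ |Sk k u| ≤ M ∧ |Suu k u| ≤ M ∧
      |Q k u| ≤ M ∧ |Qu k u| ≤ M ∧ |Qk k u| ≤ M)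
    (hMfu : ∀ k ∈ Set.Icc α β, ∀ u ∈ Set.Icc a b, |fu k u| ≤ Mfu)
    (hfab : ∀ k ∈ Set.Icc α β, f k a = 0 ∧ f k b = 0)
    (κ c₂ : ℝ) (hκ : κ ∈ Set.Ioo (0:ℝ) 1) (hc₂ : 0 < c₂)
    :
    ∃ K₂ K₃ K₄ : ℝ, 0 ≤ K₂ ∧ 0 ≤ K₃ ∧ 0 ≤ K₄ ∧
      ∀ lam : ℝ, 0 < lam → lam ≤ c₂ → lam * Mfu ≤ 1 - κ →
      ∀ km ∈ Set.Icc α β, ∀ kp ∈ Set.Icc α β, ∀ ks ∈ Set.Icc α β,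
      ∀ um ∈ Set.Icc a b, ∀ up ∈ Set.Icc a b,
        |S ks ((um + up) / 2 - lam / 2 * (f kp up - f km um))
            - (S km um + S kp up) / 2 + lam / 2 * (Q kp up - Q km um)|
          ≤ K₂ * (up - um) ^ 2 + K₃ * |kp - km| + K₄ * |ks - (km + kp) / 2| := by
  choose _ _ hfk_le _ hSu_le hSk_le hSuu_le _ _ hQk_le using hM
  -- `0 ≤ M` is only available once a point of the rectangle is given, hence `|M|`
  refine ⟨3 * |M| / 4, |M| * (1 + c₂ + c₂ * |M|) / 2, |M|, by positivity, by positivity,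
    abs_nonneg M, ?_⟩
  intro lam hlam hlamc hlamκ km hkm kp hkp ks hks um hum up hup
  have hM0 : 0 ≤ M := (abs_nonneg _).trans (hSk_le km hkm um hum)
  have hlamL : lam * Mfu ≤ 1 := by linarith [hκ.1]
  have hkb := add_div_two_mem_Icc hkm hkp
  have hdiag : |entropyDefect S Q f lam ((km + kp) / 2) ((km + kp) / 2) ((km + kp) / 2) um up|
      ≤ 3 * M / 4 * (up - um) ^ 2 :=
    abs_entropyDefect_diag_le (hSu _ hkb) (hSuu _ hkb) (hfu _ hkb)
      (fun u hu => hent _ hkb u hu ▸ hQu _ hkb u hu) (hSuu_le _ hkb) (hMfu _ hkb) hlam.le hlamL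
      hum hup
  have hpert := abs_entropyDefect_sub_diag_le (abs_sub_le_of_hasDerivAt_fst hSk hSk_le)
    (abs_sub_le_of_hasDerivAt_fst hQk hQk_le) (abs_sub_le_of_hasDerivAt_fst hfk hfk_le)
    (abs_sub_le_of_hasDerivAt_snd hSu hSu_le)
    (fun _ hk₁ _ hk₂ => laxFriedrichs_mem_Icc hfab (abs_sub_le_of_hasDerivAt_snd hfu hMfu)
      hlam.le hlamL hk₁ hk₂ hum hup) hM0 hlam.le hlamc hkm hkp hks hum hup
  change |entropyDefect S Q f lam km kp ks um up| ≤ _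
  rw [abs_of_nonneg hM0]
  linarith [abs_sub_abs_le_abs_sub (entropyDefect S Q f lam km kp ks um up)
    (entropyDefect S Q f lam ((km + kp) / 2) ((km + kp) / 2) ((km + kp) / 2) um up)]

theorem stmt5
    (α β a b : ℝ) (hαβ : α < β) (hab : a < b)
    (f S Q fu fk Su Sk Suu Qu Qk : ℝ → ℝ → ℝ)
    (hfu : ∀ k ∈ Set.Icc α β, ∀ u ∈ Set.Icc a b, HasDerivAt (fun v => f k v) (fu k u) u)
    (hfk : ∀ k ∈ Set.Icc α β, ∀ u ∈ Set.Icc a b, HasDerivAt (fun w => f w u) (fk k u) k)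
    (hSu : ∀ k ∈ Set.Icc α β, ∀ u ∈ Set.Icc a b, HasDerivAt (fun v => S k v) (Su k u) u)
    (hSk : ∀ k ∈ Set.Icc α β, ∀ u ∈ Set.Icc a b, HasDerivAt (fun w => S w u) (Sk k u) k)
    (hSuu : ∀ k ∈ Set.Icc α β, ∀ u ∈ Set.Icc a b, HasDerivAt (fun v => Su k v) (Suu k u) u)
    (hQu : ∀ k ∈ Set.Icc α β, ∀ u ∈ Set.Icc a b, HasDerivAt (fun v => Q k v) (Qu k u) u)
    (hQk : ∀ k ∈ Set.Icc α β, ∀ u ∈ Set.Icc a b, HasDerivAt (fun w => Q w u) (Qk k u) k)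
    (hent : ∀ k ∈ Set.Icc α β, ∀ u ∈ Set.Icc a b, Qu k u = Su k u * fu k u)
    (M Mfu : ℝ)
    (hM : ∀ k ∈ Set.Icc α β, ∀ u ∈ Set.Icc a b,
      |f k u| ≤ M ∧ |fu k u| ≤ M ∧ |fk k u| ≤ M ∧
      |S k u| ≤ M ∧ |Su k u| ≤ M ∧ |Sk k u| ≤ M ∧ |Suu k u| ≤ M ∧
      |Q k u| ≤ M ∧ |Qu k u| ≤ M ∧ |Qk k u| ≤ M)
    (hMfu : ∀ k ∈ Set.Icc α β, ∀ u ∈ Set.Icc a b, |fu k u| ≤ Mfu)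
    (hfab : ∀ k ∈ Set.Icc α β, f k a = 0 ∧ f k b = 0)
    (κ c₂ : ℝ) (hκ : κ ∈ Set.Ioo (0:ℝ) 1) (hc₂ : 0 < c₂)
    :
    ∃ K₂ K₃ K₄ : ℝ, 0 ≤ K₂ ∧ 0 ≤ K₃ ∧ 0 ≤ K₄ ∧
      ∀ lam : ℝ, 0 < lam → lam ≤ c₂ → lam * Mfu ≤ 1 - κ →
      ∀ km ∈ Set.Icc α β, ∀ kp ∈ Set.Icc α β, ∀ ks ∈ Set.Icc α β,
      ∀ um ∈ Set.Icc a b, ∀ up ∈ Set.Icc a b,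
        |S ks ((um + up) / 2 - lam / 2 * (f kp up - f km um))
            - (S km um + S kp up) / 2 + lam / 2 * (Q kp up - Q km um)|
          ≤ K₂ * (up - um) ^ 2 + K₃ * |kp - km| + K₄ * |ks - (km + kp) / 2| :=
  stmt5_general α β a b f S Q fu fk Su Sk Suu Qu Qk hfu hfk hSu hSk hSuu hQu hQk hent M Mfu hM hMfu
    hfab κ c₂ hκ hc₂
end

section
/- For all v,w∈[a,b] and all k∈[α,β], (w−v)(Q(k,w)−Q(k,v)) − (S(k,w)−S(k,v))(f(k,w)−f(k,v)) ≥ C_{f,S} |w−v|^{p_f+p_S+2}, where C_{f,S} = C_f·C_S / ((1+p_f+p_S)(2+p_f+p_S)). -/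
/-!
For `v ≤ w` the pairing `G(x) = (x - v)(Q x - Q v) - (S x - S v)(f x - f v)` (`entropyPairing`)
vanishes at `v`. Since `∂ᵤQ = ∂ᵤS · ∂ᵤf`, its derivative is
`D(v, x) = ∫ t in v..x, (∂ᵤS x - ∂ᵤS t)(∂ᵤf x - ∂ᵤf t)` (`dissipationRate`), and genuine nonlinearity bounds the
integrand below by `C_f C_S (x - t)^(p_f + p_S)`. Integrating this bound twice gives the claim.
Both integrations are done by comparing derivatives (mean value theorem), using
`∂ᵥD(v, x) = -(∂ᵤS x - ∂ᵤS v)(∂ᵤf x - ∂ᵤf v)` and `D(x, x) = 0`.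
-/

open Set

theorem sub_le_sub_of_hasDerivAt_le {g h g' h' : ℝ → ℝ} {x y : ℝ} (hxy : x ≤ y)
    (hg : ContinuousOn g (Icc x y)) (hh : ContinuousOn h (Icc x y))
    (hg' : ∀ t ∈ Ioo x y, HasDerivAt g (g' t) t) (hh' : ∀ t ∈ Ioo x y, HasDerivAt h (h' t) t)
    (hle : ∀ t ∈ Ioo x y, g' t ≤ h' t) :
    g y - g x ≤ h y - h x := by
  have hmono : MonotoneOn (h - g) (Icc x y) := by
    refine monotoneOn_of_hasDerivWithinAt_nonneg (convex_Icc x y) (hh.sub hg) (f' := h' - g')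
      (fun t ht ↦ ?_) (fun t ht ↦ ?_) <;> rw [interior_Icc] at ht
    · exact ((hh' t ht).sub (hg' t ht)).hasDerivWithinAt
    · exact sub_nonneg.2 (hle t ht)
  have := hmono (left_mem_Icc.2 hxy) (right_mem_Icc.2 hxy) hxy
  simp only [Pi.sub_apply] at this
  linarith

theorem mul_rpow_add_le_mul_sub {fu Su : ℝ → ℝ} {Cf CS pf pS t u : ℝ} (htu : t < u)
    (hCf : 0 ≤ Cf) (hCS : 0 ≤ CS) (hf : Cf * (u - t) ^ pf ≤ fu u - fu t)
    (hS : CS * (u - t) ^ pS ≤ Su u - Su t) :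
    Cf * CS * (u - t) ^ (pf + pS) ≤ (Su u - Su t) * (fu u - fu t) := by
  have hpos : 0 < u - t := sub_pos.2 htu
  calc Cf * CS * (u - t) ^ (pf + pS) = (CS * (u - t) ^ pS) * (Cf * (u - t) ^ pf) := by
        rw [Real.rpow_add hpos]; ring
    _ ≤ (Su u - Su t) * (fu u - fu t) :=
        mul_le_mul hS hf (by positivity) ((by positivity : 0 ≤ CS * (u - t) ^ pS).trans hS)

def entropyPairing (f S Q : ℝ → ℝ) (v w : ℝ) : ℝ :=
  (w - v) * (Q w - Q v) - (S w - S v) * (f w - f v)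

theorem entropyPairing_comm (f S Q : ℝ → ℝ) (v w : ℝ) :
    entropyPairing f S Q v w = entropyPairing f S Q w v := by
  simp only [entropyPairing]; ring

@[simp]
theorem entropyPairing_self (f S Q : ℝ → ℝ) (v : ℝ) : entropyPairing f S Q v v = 0 := by
  simp [entropyPairing]

def dissipationRate (f S Q fu Su : ℝ → ℝ) (v u : ℝ) : ℝ :=
  Q u - Q v + (u - v) * (Su u * fu u) - Su u * (f u - f v) - (S u - S v) * fu u

section

variable {f S Q fu Su : ℝ → ℝ}

theorem hasDerivAt_dissipationRate_left {x u : ℝ} (hf : HasDerivAt f (fu x) x)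
    (hS : HasDerivAt S (Su x) x) (hQ : HasDerivAt Q (Su x * fu x) x) :
    HasDerivAt (fun v ↦ dissipationRate f S Q fu Su v u) (-((Su u - Su x) * (fu u - fu x))) x := by
  have := ((((hasDerivAt_const x (Q u)).sub hQ).add
    (((hasDerivAt_const x u).sub (hasDerivAt_id x)).mul_const (Su u * fu u))).sub
    (((hasDerivAt_const x (f u)).sub hf).const_mul (Su u))).sub
    (((hasDerivAt_const x (S u)).sub hS).mul_const (fu u))
  exact this.congr_deriv (by ring)

theorem hasDerivAt_entropyPairing {v u : ℝ} (hf : HasDerivAt f (fu u) u)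
    (hS : HasDerivAt S (Su u) u) (hQ : HasDerivAt Q (Su u * fu u) u) :
    HasDerivAt (entropyPairing f S Q v) (dissipationRate f S Q fu Su v u) u := by
  have := (((hasDerivAt_id u).sub_const v).mul (hQ.sub_const (Q v))).sub
    ((hS.sub_const (S v)).mul (hf.sub_const (f v)))
  exact this.congr_deriv (by simp only [dissipationRate, id]; ring)

@[simp]
theorem dissipationRate_self (u : ℝ) : dissipationRate f S Q fu Su u u = 0 := by
  simp [dissipationRate]

theorem rpow_succ_div_le_dissipationRate {C p v u : ℝ} (hvu : v ≤ u) (hp : 0 ≤ p)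
    (hf : ∀ x ∈ Icc v u, HasDerivAt f (fu x) x) (hS : ∀ x ∈ Icc v u, HasDerivAt S (Su x) x)
    (hQ : ∀ x ∈ Icc v u, HasDerivAt Q (Su x * fu x) x)
    (hprod : ∀ t ∈ Ioo v u, C * (u - t) ^ p ≤ (Su u - Su t) * (fu u - fu t)) :
    C * (u - v) ^ (p + 1) / (p + 1) ≤ dissipationRate f S Q fu Su v u := by
  have hrate (x) (hx : x ∈ Icc v u) :=
    hasDerivAt_dissipationRate_left (u := u) (hf x hx) (hS x hx) (hQ x hx)
  have hpow (t) (ht : t ∈ Ioo v u) :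
      HasDerivAt (fun x ↦ C * (u - x) ^ (p + 1) / (p + 1)) (-(C * (u - t) ^ p)) t := by
    have := ((((hasDerivAt_const t u).sub (hasDerivAt_id t)).rpow_const (p := p + 1)
      (Or.inl (sub_pos.2 ht.2).ne')).const_mul C).div_const (p + 1)
    refine this.congr_deriv ?_
    field_simp
    simp
  have := sub_le_sub_of_hasDerivAt_le hvu
    (continuousOn_of_forall_continuousAt fun x hx ↦ (hrate x hx).continuousAt)
    (by fun_prop (disch := linarith)) (fun t ht ↦ hrate t (Ioo_subset_Icc_self ht)) hpow
    (fun t ht ↦ neg_le_neg (hprod t ht))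
  have hzero : C * (u - u) ^ (p + 1) / (p + 1) = 0 := by
    rw [sub_self, Real.zero_rpow (by linarith), mul_zero, zero_div]
  rw [hzero, dissipationRate_self] at this
  linarith

theorem rpow_le_entropyPairing {C p v w : ℝ} (hvw : v ≤ w) (hp : 0 ≤ p)
    (hf : ∀ x ∈ Icc v w, HasDerivAt f (fu x) x) (hS : ∀ x ∈ Icc v w, HasDerivAt S (Su x) x)
    (hQ : ∀ x ∈ Icc v w, HasDerivAt Q (Su x * fu x) x)
    (hprod : ∀ t u, v ≤ t → t < u → u ≤ w → C * (u - t) ^ p ≤ (Su u - Su t) * (fu u - fu t)) :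
    C / ((p + 1) * (p + 2)) * (w - v) ^ (p + 2) ≤ entropyPairing f S Q v w := by
  have hpair (x) (hx : x ∈ Icc v w) :=
    hasDerivAt_entropyPairing (v := v) (hf x hx) (hS x hx) (hQ x hx)
  have hpow (u) (hu : u ∈ Ioo v w) :
      HasDerivAt (fun x ↦ C / ((p + 1) * (p + 2)) * (x - v) ^ (p + 2))
        (C * (u - v) ^ (p + 1) / (p + 1)) u := by
    have := (((hasDerivAt_id u).sub_const v).rpow_const (p := p + 2)
      (Or.inl (sub_pos.2 hu.1).ne')).const_mul (C / ((p + 1) * (p + 2)))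
    refine this.congr_deriv ?_
    have : p + 2 - 1 = p + 1 := by ring
    rw [id, this]
    field_simp
  have hrate (u) (hu : u ∈ Ioo v w) :
      C * (u - v) ^ (p + 1) / (p + 1) ≤ dissipationRate f S Q fu Su v u := by
    have hsub : Icc v u ⊆ Icc v w := Icc_subset_Icc_right hu.2.le
    exact rpow_succ_div_le_dissipationRate hu.1.le hp (fun x hx ↦ hf x (hsub hx))
      (fun x hx ↦ hS x (hsub hx)) (fun x hx ↦ hQ x (hsub hx))
      (fun t ht ↦ hprod t u ht.1.le ht.2 hu.2.le)
  have := sub_le_sub_of_hasDerivAt_le hvw (by fun_prop (disch := linarith))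
    (continuousOn_of_forall_continuousAt fun x hx ↦ (hpair x hx).continuousAt) hpow
    (fun u hu ↦ hpair u (Ioo_subset_Icc_self hu)) hrate
  rw [sub_self, Real.zero_rpow (by linarith), entropyPairing_self] at this
  simpa using this

end

theorem stmt8_general
    (α β a b : ℝ)
    (f S Q fu Su Qu : ℝ → ℝ → ℝ)
    (hfu : ∀ k ∈ Set.Icc α β, ∀ u ∈ Set.Icc a b, HasDerivAt (fun v => f k v) (fu k u) u)
    (hSu : ∀ k ∈ Set.Icc α β, ∀ u ∈ Set.Icc a b, HasDerivAt (fun v => S k v) (Su k u) u)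
    (hQu : ∀ k ∈ Set.Icc α β, ∀ u ∈ Set.Icc a b, HasDerivAt (fun v => Q k v) (Qu k u) u)
    (hent : ∀ k ∈ Set.Icc α β, ∀ u ∈ Set.Icc a b, Qu k u = Su k u * fu k u)
    (Cf CS pf pS : ℝ) (hCf : 0 < Cf) (hCS : 0 < CS) (hpf : 1 ≤ pf) (hpS : 1 ≤ pS)
    (hGNf : ∀ k ∈ Set.Icc α β, ∀ w v : ℝ, a ≤ w → w < v → v ≤ b →
      Cf * (v - w) ^ pf ≤ fu k v - fu k w)
    (hGNS : ∀ k ∈ Set.Icc α β, ∀ w v : ℝ, a ≤ w → w < v → v ≤ b →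
      CS * (v - w) ^ pS ≤ Su k v - Su k w) :
    ∀ k ∈ Set.Icc α β, ∀ v ∈ Set.Icc a b, ∀ w ∈ Set.Icc a b,
      Cf * CS / ((1 + pf + pS) * (2 + pf + pS)) * |w - v| ^ (pf + pS + 2)
        ≤ (w - v) * (Q k w - Q k v) - (S k w - S k v) * (f k w - f k v) := by
  intro k hk v hv w hw
  wlog hvw : v ≤ w generalizing v w
  · rw [abs_sub_comm]
    exact (this w hw v hv (le_of_not_ge hvw)).trans_eq (entropyPairing_comm _ _ _ _ _)
  have hsub : Icc v w ⊆ Icc a b := Icc_subset_Icc hv.1 hw.2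
  have hQ (x) (hx : x ∈ Icc a b) : HasDerivAt (Q k) (Su k x * fu k x) x :=
    hent k hk x hx ▸ hQu k hk x hx
  have hprod (t u) (hvt : v ≤ t) (htu : t < u) (huw : u ≤ w) :=
    have hat := hv.1.trans hvt
    have hub := huw.trans hw.2
    mul_rpow_add_le_mul_sub htu hCf.le hCS.le (hGNf k hk t u hat htu hub)
      (hGNS k hk t u hat htu hub)
  have := rpow_le_entropyPairing hvw (by linarith) (fun x hx ↦ hfu k hk x (hsub hx))
    (fun x hx ↦ hSu k hk x (hsub hx)) (fun x hx ↦ hQ x (hsub hx)) hprod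
  rw [abs_of_nonneg (sub_nonneg.2 hvw)]
  change _ ≤ entropyPairing (f k) (S k) (Q k) v w
  convert this using 3; ring

theorem stmt8
    (α β a b : ℝ) (hαβ : α < β) (hab : a < b)
    (f S Q fu Su Qu : ℝ → ℝ → ℝ)
    (hfu : ∀ k ∈ Set.Icc α β, ∀ u ∈ Set.Icc a b, HasDerivAt (fun v => f k v) (fu k u) u)
    (hSu : ∀ k ∈ Set.Icc α β, ∀ u ∈ Set.Icc a b, HasDerivAt (fun v => S k v) (Su k u) u)
    (hQu : ∀ k ∈ Set.Icc α β, ∀ u ∈ Set.Icc a b, HasDerivAt (fun v => Q k v) (Qu k u) u)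
    (hfuc : ∀ k ∈ Set.Icc α β, ContinuousOn (fun u => fu k u) (Set.Icc a b))
    (hSuc : ∀ k ∈ Set.Icc α β, ContinuousOn (fun u => Su k u) (Set.Icc a b))
    (hent : ∀ k ∈ Set.Icc α β, ∀ u ∈ Set.Icc a b, Qu k u = Su k u * fu k u)
    (Cf CS pf pS : ℝ) (hCf : 0 < Cf) (hCS : 0 < CS) (hpf : 1 ≤ pf) (hpS : 1 ≤ pS)
    (hGNf : ∀ k ∈ Set.Icc α β, ∀ w v : ℝ, a ≤ w → w < v → v ≤ b →
      Cf * (v - w) ^ pf ≤ fu k v - fu k w)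
    (hGNS : ∀ k ∈ Set.Icc α β, ∀ w v : ℝ, a ≤ w → w < v → v ≤ b →
      CS * (v - w) ^ pS ≤ Su k v - Su k w) :
    ∀ k ∈ Set.Icc α β, ∀ v ∈ Set.Icc a b, ∀ w ∈ Set.Icc a b,
      Cf * CS / ((1 + pf + pS) * (2 + pf + pS)) * |w - v| ^ (pf + pS + 2)
        ≤ (w - v) * (Q k w - Q k v) - (S k w - S k v) * (f k w - f k v) :=
  stmt8_general α β a b f S Q fu Su Qu hfu hSu hQu hent Cf CS pf pS hCf hCS hpf hpS hGNf hGNS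
end

section
/- Suppose f∈C²([α,β]×[a,b]) with ∂²_{uu}f(k,ξ)≥γ>0 for all (k,ξ)∈[α,β]×[a,b], and let Q∈C¹ satisfy ∂_u Q(k,u)=(∂_u f(k,u))² (the entropy flux corresponding to the entropy S=f). Then for all v,w∈[a,b] and all k∈[α,β], (w−v)(Q(k,w)−Q(k,v)) − (f(k,w)−f(k,v))² ≥ (γ²/12)|w−v|⁴. -/
open Set

/-!
Fix `v` and let `x` run from `v` to `w`. Three successive monotonicity arguments, each starting
from the value `0` at `x = v`, give
* `(x - v) f'(x) - (f(x) - f(v)) ≥ γ/2 (x - v)²`, since the left side has derivative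
  `(x - v) f''(x) ≥ γ (x - v)`;
* `Q(x) - Q(v) + (x - v) f'(x)² - 2 (f(x) - f(v)) f'(x) ≥ γ²/3 (x - v)³`, since the left side has
  derivative `2 f''(x) ((x - v) f'(x) - (f(x) - f(v))) ≥ γ² (x - v)²` by the first bound;
* `(x - v)(Q(x) - Q(v)) - (f(x) - f(v))² ≥ γ²/12 (x - v)⁴`, since the left side has
  derivative the left side of the second bound.
-/

lemma nonneg_of_hasDerivAt_nonneg_of_eq_zero {F F' : ℝ → ℝ} {v w : ℝ}
    (hF : ∀ x ∈ Icc v w, HasDerivAt F (F' x) x) (hF' : ∀ x ∈ Icc v w, 0 ≤ F' x) (hv : F v = 0) :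
    ∀ x ∈ Icc v w, 0 ≤ F x := by
  intro x hx
  have hmono : MonotoneOn F (Icc v w) := by
    refine monotoneOn_of_hasDerivWithinAt_nonneg (f' := F') (convex_Icc v w)
      (fun y hy => (hF y hy).continuousAt.continuousWithinAt) (fun y hy => ?_) (fun y hy => ?_)
    · exact (hF y (interior_subset hy)).hasDerivWithinAt
    · exact hF' y (interior_subset hy)
  simpa [hv] using hmono (left_mem_Icc.2 (hx.1.trans hx.2)) hx hx.1

section

variable {f f' f'' Q : ℝ → ℝ} {γ v w : ℝ}

lemma half_mul_sq_le_mul_deriv_sub_sub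
    (hf : ∀ x ∈ Icc v w, HasDerivAt f (f' x) x) (hf' : ∀ x ∈ Icc v w, HasDerivAt f' (f'' x) x)
    (hγ : ∀ x ∈ Icc v w, γ ≤ f'' x) :
    ∀ x ∈ Icc v w, γ / 2 * (x - v) ^ 2 ≤ (x - v) * f' x - (f x - f v) := by
  have hderiv : ∀ x ∈ Icc v w, HasDerivAt
      (fun x => (x - v) * f' x - (f x - f v) - γ / 2 * (x - v) ^ 2) ((x - v) * (f'' x - γ)) x := by
    intro x hx
    have := ((((hasDerivAt_id x).sub_const v).mul (hf' x hx)).sub ((hf x hx).sub_const (f v))).sub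
      ((((hasDerivAt_id x).sub_const v).pow 2).const_mul (γ / 2))
    exact this.congr_deriv (by simp only [id]; push_cast; ring)
  intro x hx
  have := nonneg_of_hasDerivAt_nonneg_of_eq_zero hderiv
    (fun y hy => mul_nonneg (sub_nonneg.2 hy.1) (sub_nonneg.2 (hγ y hy))) (by simp) x hx
  linarith

lemma sq_mul_cube_le_sub_add_mul_deriv_sq_sub
    (hγ₀ : 0 ≤ γ) (hf : ∀ x ∈ Icc v w, HasDerivAt f (f' x) x)
    (hf' : ∀ x ∈ Icc v w, HasDerivAt f' (f'' x) x) (hγ : ∀ x ∈ Icc v w, γ ≤ f'' x)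
    (hQ : ∀ x ∈ Icc v w, HasDerivAt Q (f' x ^ 2) x) :
    ∀ x ∈ Icc v w,
      γ ^ 2 / 3 * (x - v) ^ 3 ≤ Q x - Q v + (x - v) * f' x ^ 2 - 2 * (f x - f v) * f' x := by
  have hderiv : ∀ x ∈ Icc v w, HasDerivAt
      (fun x => Q x - Q v + (x - v) * f' x ^ 2 - 2 * (f x - f v) * f' x - γ ^ 2 / 3 * (x - v) ^ 3)
      (2 * f'' x * ((x - v) * f' x - (f x - f v)) - γ ^ 2 * (x - v) ^ 2) x := by
    intro x hx
    have := ((((hQ x hx).sub_const (Q v)).add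
      (((hasDerivAt_id x).sub_const v).mul ((hf' x hx).pow 2))).sub
      ((((hf x hx).sub_const (f v)).const_mul 2).mul (hf' x hx))).sub
      ((((hasDerivAt_id x).sub_const v).pow 3).const_mul (γ ^ 2 / 3))
    exact this.congr_deriv (by simp only [id, Pi.pow_apply]; push_cast; ring)
  have hderiv_nonneg :
      ∀ x ∈ Icc v w, 0 ≤ 2 * f'' x * ((x - v) * f' x - (f x - f v)) - γ ^ 2 * (x - v) ^ 2 := by
    intro x hx
    have htangent := half_mul_sq_le_mul_deriv_sub_sub hf hf' hγ x hx
    have hgap : 0 ≤ (x - v) * f' x - (f x - f v) := le_trans (by positivity) htangent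
    nlinarith [mul_le_mul_of_nonneg_right (hγ x hx) hgap, mul_le_mul_of_nonneg_left htangent hγ₀]
  intro x hx
  have := nonneg_of_hasDerivAt_nonneg_of_eq_zero hderiv hderiv_nonneg (by simp) x hx
  linarith

lemma sq_mul_pow_four_le_of_le
    (hγ₀ : 0 ≤ γ) (hvw : v ≤ w) (hf : ∀ x ∈ Icc v w, HasDerivAt f (f' x) x)
    (hf' : ∀ x ∈ Icc v w, HasDerivAt f' (f'' x) x) (hγ : ∀ x ∈ Icc v w, γ ≤ f'' x)
    (hQ : ∀ x ∈ Icc v w, HasDerivAt Q (f' x ^ 2) x) :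
    γ ^ 2 / 12 * (w - v) ^ 4 ≤ (w - v) * (Q w - Q v) - (f w - f v) ^ 2 := by
  have hderiv : ∀ x ∈ Icc v w, HasDerivAt
      (fun x => (x - v) * (Q x - Q v) - (f x - f v) ^ 2 - γ ^ 2 / 12 * (x - v) ^ 4)
      (Q x - Q v + (x - v) * f' x ^ 2 - 2 * (f x - f v) * f' x - γ ^ 2 / 3 * (x - v) ^ 3) x := by
    intro x hx
    have := ((((hasDerivAt_id x).sub_const v).mul ((hQ x hx).sub_const (Q v))).sub
      (((hf x hx).sub_const (f v)).pow 2)).sub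
      ((((hasDerivAt_id x).sub_const v).pow 4).const_mul (γ ^ 2 / 12))
    exact this.congr_deriv (by simp only [id]; push_cast; ring)
  have := nonneg_of_hasDerivAt_nonneg_of_eq_zero hderiv
    (fun x hx => sub_nonneg.2 (sq_mul_cube_le_sub_add_mul_deriv_sq_sub hγ₀ hf hf' hγ hQ x hx)) (by simp)
    w (right_mem_Icc.2 hvw)
  linarith

lemma sq_mul_abs_pow_four_le
    (hγ₀ : 0 ≤ γ) (hf : ∀ x ∈ uIcc v w, HasDerivAt f (f' x) x)
    (hf' : ∀ x ∈ uIcc v w, HasDerivAt f' (f'' x) x) (hγ : ∀ x ∈ uIcc v w, γ ≤ f'' x)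
    (hQ : ∀ x ∈ uIcc v w, HasDerivAt Q (f' x ^ 2) x) :
    γ ^ 2 / 12 * |w - v| ^ 4 ≤ (w - v) * (Q w - Q v) - (f w - f v) ^ 2 := by
  rcases le_total v w with hvw | hwv
  · rw [uIcc_of_le hvw] at hf hf' hγ hQ
    rw [abs_of_nonneg (sub_nonneg.2 hvw)]
    exact sq_mul_pow_four_le_of_le hγ₀ hvw hf hf' hγ hQ
  · rw [uIcc_of_ge hwv] at hf hf' hγ hQ
    rw [abs_sub_comm, abs_of_nonneg (sub_nonneg.2 hwv)]
    have := sq_mul_pow_four_le_of_le hγ₀ hwv hf hf' hγ hQ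
    linarith

end

theorem stmt9_general
    (α β a b γ : ℝ) (hγ : 0 < γ)
    (f Q fu fuu : ℝ → ℝ → ℝ)
    (hfu : ∀ k ∈ Set.Icc α β, ∀ u ∈ Set.Icc a b, HasDerivAt (fun v => f k v) (fu k u) u)
    (hfuu : ∀ k ∈ Set.Icc α β, ∀ u ∈ Set.Icc a b, HasDerivAt (fun v => fu k v) (fuu k u) u)
    (hconv : ∀ k ∈ Set.Icc α β, ∀ u ∈ Set.Icc a b, γ ≤ fuu k u)
    (hQu : ∀ k ∈ Set.Icc α β, ∀ u ∈ Set.Icc a b,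
      HasDerivAt (fun v => Q k v) ((fu k u) ^ 2) u) :
    ∀ k ∈ Set.Icc α β, ∀ v ∈ Set.Icc a b, ∀ w ∈ Set.Icc a b,
      γ ^ 2 / 12 * |w - v| ^ 4
        ≤ (w - v) * (Q k w - Q k v) - (f k w - f k v) ^ 2 := by
  intro k hk v hv w hw
  have hsub : uIcc v w ⊆ Icc a b := uIcc_subset_Icc hv hw
  exact sq_mul_abs_pow_four_le hγ.le (fun x hx => hfu k hk x (hsub hx))
    (fun x hx => hfuu k hk x (hsub hx)) (fun x hx => hconv k hk x (hsub hx))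
    (fun x hx => hQu k hk x (hsub hx))

theorem stmt9
    (α β a b γ : ℝ) (hαβ : α < β) (hab : a < b) (hγ : 0 < γ)
    (f Q fu fuu : ℝ → ℝ → ℝ)
    (hfu : ∀ k ∈ Set.Icc α β, ∀ u ∈ Set.Icc a b, HasDerivAt (fun v => f k v) (fu k u) u)
    (hfuu : ∀ k ∈ Set.Icc α β, ∀ u ∈ Set.Icc a b, HasDerivAt (fun v => fu k v) (fuu k u) u)
    (hfuuc : ∀ k ∈ Set.Icc α β, ContinuousOn (fun u => fuu k u) (Set.Icc a b))
    (hconv : ∀ k ∈ Set.Icc α β, ∀ u ∈ Set.Icc a b, γ ≤ fuu k u)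
    (hQu : ∀ k ∈ Set.Icc α β, ∀ u ∈ Set.Icc a b,
      HasDerivAt (fun v => Q k v) ((fu k u) ^ 2) u) :
    ∀ k ∈ Set.Icc α β, ∀ v ∈ Set.Icc a b, ∀ w ∈ Set.Icc a b,
      γ ^ 2 / 12 * |w - v| ^ 4
        ≤ (w - v) * (Q k w - Q k v) - (f k w - f k v) ^ 2 :=
  stmt9_general α β a b γ hγ f Q fu fuu hfu hfuu hconv hQu
end

section
/- The following discrete interaction identity holds: (1/2)·ΔtΔx·Σ_{n=0}^{N}Σ_{j∈Ω_n}(A_jⁿE_jⁿ − D_jⁿB_jⁿ) = −Δx·Σ_{n=0}^{N}Σ_{j∈Ω′_n} C_{D,j}ⁿ𝒜_jⁿ⁺¹ − Δx·Σ_{n=0}^{N}Σ_{j∈Ω′_n} C_{A,j}ⁿ·½(𝒟_{j−1}ⁿ+𝒟_{j+1}ⁿ) + I^{N+1} − I⁰ + ℰ, where ℰ = (λ/4)ΔtΔxΣ_{n=0}^{N}Σ_{j∈Ω′_n}E_{j−1}ⁿ(B_{j+1}ⁿ−B_{j−1}ⁿ) − (1/4)ΔtΔxΣ_{n=0}^{N}Σ_{j∈Ω′_n}B_{j+1}ⁿ(D_{j+1}ⁿ−D_{j−1}ⁿ)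 − (1/(4λ))ΔtΔxΣ_{n=0}^{N}Σ_{j∈Ω′_n}(D_{j−1}ⁿ+λE_{j−1}ⁿ)(A_{j+1}ⁿ−A_{j−1}ⁿ) − (1/2)ΔtΔxΣ_{n=0}^{N}Σ_{j∈Ω′_n}E_{j−1}ⁿC_{A,j}ⁿ. -/
open MeasureTheory Set

noncomputable def calA (dx : ℝ) (A : ℤ → ℕ → ℝ) (n : ℕ) (l : ℤ) : ℝ :=
  dx * ∑' j : ℤ, (if Even (j + (n : ℤ)) ∧ j ≤ l then A j n else 0)

noncomputable def calD (dx : ℝ) (D : ℤ → ℕ → ℝ) (n : ℕ) (j : ℤ) : ℝ :=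
  dx * ∑' l : ℤ, (if Even (l + (n : ℤ)) ∧ j ≤ l then D l n else 0)

noncomputable def interI (dx : ℝ) (A D : ℤ → ℕ → ℝ) (n : ℕ) : ℝ :=
  dx ^ 2 * ∑' p : ℤ × ℤ,
    (if Even (p.1 + (n : ℤ)) ∧ Even (p.2 + (n : ℤ)) ∧ p.1 ≤ p.2
      then A p.1 n * D p.2 n else 0)

/-!
Index the staggered grids by `k ∈ ℤ`, with `j = 2k - n` on `Ω_n` and `j = 2k - n - 1` on `Ω'_n`,
so that the neighbours `j ± 1 ∈ Ω_n` of `j ∈ Ω'_n` become `k` and `k - 1`. A time step is then a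
Lax–Friedrichs step `a' k = (a (k-1) + a k)/2 - λ/2 (b k - b (k-1)) + c k` on `ℤ`, and `𝒟`, `𝒜`
and `I` become tail sums, head sums and `∑ₖ a k · tail(d) k`. The tail of `d'` is expressed
through that of `d` (both solve the same backward recursion and vanish far right), the `C_D` term
is a summation by parts, and what remains is, summand by summand, an exact difference
`G k - G (k-1)`, whose sum vanishes. Summing over `n` telescopes `I^{n+1} - I^n`.
-/

open Filter Function

theorem Function.HasFiniteSupport.eventually_cofinite {α M : Type*} [Zero M] {f : α → M}
    (hf : HasFiniteSupport f) : ∀ᶠ k in cofinite, f k = 0 :=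
  hf

theorem Function.HasFiniteSupport.summable {α M : Type*} [AddCommMonoid M]
    [TopologicalSpace M] {f : α → M} (hf : HasFiniteSupport f) : Summable f :=
  summable_of_hasFiniteSupport hf

theorem Function.HasFiniteSupport.of_eventually_atBot_atTop {f : ℤ → ℝ}
    (hbot : ∀ᶠ k in atBot, f k = 0) (htop : ∀ᶠ k in atTop, f k = 0) : HasFiniteSupport f :=
  show ∀ᶠ k in cofinite, f k = 0 by rw [Int.cofinite_eq]; exact eventually_sup.2 ⟨hbot, htop⟩

theorem injective_two_mul_sub (c : ℤ) : Injective fun k : ℤ => 2 * k - c :=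
  fun k l h => by simp only at h; omega

theorem Function.HasFiniteSupport.comp_two_mul_sub {f : ℤ → ℝ} (hf : HasFiniteSupport f)
    (c : ℤ) : HasFiniteSupport fun k => f (2 * k - c) :=
  hf.fun_comp_of_injective (injective_two_mul_sub c)

theorem hasFiniteSupport_of_abs_lt {f : ℤ → ℝ} {R : ℤ} (h : ∀ j, R < |j| → f j = 0) :
    HasFiniteSupport f :=
  (Set.finite_Icc (-R) R).subset fun j hj =>
    Set.mem_Icc.2 (abs_le.1 (not_lt.1 fun hlt => hj (h j hlt)))

theorem hasSum_zero_of_eq_sub_shift {F G : ℤ → ℝ} (hG : HasFiniteSupport G)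
    (hF : ∀ k, F k = G k - G (k - 1)) : HasSum F 0 := by
  have hs := hG.summable.hasSum
  have := hs.sub ((Equiv.subRight (1 : ℤ)).hasSum_iff (f := G).2 hs)
  rw [sub_self] at this
  exact funext hF ▸ this

section TailSums

variable {f g : ℤ → ℝ}

noncomputable def tailSum (f : ℤ → ℝ) (k : ℤ) : ℝ := ∑' m, if k ≤ m then f m else 0

noncomputable def headSum (f : ℤ → ℝ) (k : ℤ) : ℝ := ∑' m, if m ≤ k then f m else 0

theorem tailSum_eq_add_tailSum_add_one (hf : HasFiniteSupport f) (k : ℤ) :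
    tailSum f k = f k + tailSum f (k + 1) := by
  have hs : Summable fun m => if k ≤ m then f m else 0 :=
    HasFiniteSupport.summable (hf.subset fun m hm => by aesop)
  rw [tailSum, hs.tsum_eq_add_tsum_ite k, if_pos le_rfl, tailSum]
  congr 1
  exact tsum_congr fun m => by split_ifs <;> first | rfl | omega

theorem headSum_eq_headSum_sub_one_add (hf : HasFiniteSupport f) (k : ℤ) :
    headSum f k = headSum f (k - 1) + f k := by
  have hs : Summable fun m => if m ≤ k then f m else 0 :=
    HasFiniteSupport.summable (hf.subset fun m hm => by aesop)
  rw [headSum, hs.tsum_eq_add_tsum_ite k, if_pos le_rfl, headSum, add_comm]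
  congr 1
  exact tsum_congr fun m => by split_ifs <;> first | rfl | omega

theorem tailSum_eventually_atTop (hf : HasFiniteSupport f) :
    ∀ᶠ k in atTop, tailSum f k = 0 := by
  obtain ⟨K, hK⟩ := eventually_atTop.1 (hf.eventually_cofinite.filter_mono atTop_le_cofinite)
  refine eventually_atTop.2 ⟨K, fun k hk => ?_⟩
  refine (tsum_congr fun m => ?_).trans tsum_zero
  split_ifs with hm
  exacts [hK m (hk.trans hm), rfl]

theorem headSum_eventually_atBot (hf : HasFiniteSupport f) :
    ∀ᶠ k in atBot, headSum f k = 0 := by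
  obtain ⟨K, hK⟩ := eventually_atBot.1 (hf.eventually_cofinite.filter_mono atBot_le_cofinite)
  refine eventually_atBot.2 ⟨K, fun k hk => ?_⟩
  refine (tsum_congr fun m => ?_).trans tsum_zero
  split_ifs with hm
  exacts [hK m (hm.trans hk), rfl]

theorem tailSum_eq_of_eq_add (hf : HasFiniteSupport f) {Q : ℤ → ℝ}
    (hQ : ∀ k, Q k = f k + Q (k + 1)) (hQ_top : ∀ᶠ k in atTop, Q k = 0) (k : ℤ) :
    tailSum f k = Q k := by
  obtain ⟨K, hK⟩ := eventually_atTop.1 (hQ_top.and (tailSum_eventually_atTop hf))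
  have hconst : ∀ m, k ≤ m → Q k - tailSum f k = Q m - tailSum f m := by
    intro m hm
    induction m, hm using Int.leInduction with
    | base => rfl
    | succ m _ ih => rw [ih, hQ m, tailSum_eq_add_tailSum_add_one hf m]; ring
  have := hconst (max k K) (le_max_left _ _)
  rw [(hK _ (le_max_right _ _)).1, (hK _ (le_max_right _ _)).2] at this
  linarith

theorem tsum_mul_tailSum (hf : HasFiniteSupport f) (hg : HasFiniteSupport g) :
    ∑' k, f k * tailSum g k = ∑' k, g k * headSum f k := by
  have hG : HasFiniteSupport fun k => headSum f k * tailSum g (k + 1) :=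
    .of_eventually_atBot_atTop ((headSum_eventually_atBot hf).mono fun k hk => by simp [hk])
      (((tendsto_atTop_add_const_right _ 1 tendsto_id).eventually
        (tailSum_eventually_atTop hg)).mono fun k hk => by
          simp [show tailSum g (k + 1) = 0 from hk])
  have := ((HasFiniteSupport.summable (f := fun k => f k * tailSum g k) (by fun_prop)).hasSum.sub
    (HasFiniteSupport.summable (f := fun k => g k * headSum f k) (by fun_prop)).hasSum).unique
    (hasSum_zero_of_eq_sub_shift hG fun k => ?_)
  · linarith
  · rw [sub_add_cancel, headSum_eq_headSum_sub_one_add hf k, tailSum_eq_add_tailSum_add_one hg k]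
    ring

end TailSums

section LaxFriedrichs

variable {x : ℝ} {a b d e ca cd a' d' : ℤ → ℝ}

theorem tailSum_laxFriedrichs (hd : HasFiniteSupport d) (he : HasFiniteSupport e)
    (hcd : HasFiniteSupport cd)
    (hd' : ∀ k, d' k = (d (k - 1) + d k) / 2 - x / 2 * (e k - e (k - 1)) + cd k) (k : ℤ) :
    tailSum d' k = (tailSum d (k - 1) + tailSum d k) / 2 + x / 2 * e (k - 1) + tailSum cd k := by
  have hd'_fin : HasFiniteSupport d' := by
    rw [funext hd']; fun_prop (disch := first | simp | exact sub_left_injective)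
  apply tailSum_eq_of_eq_add hd'_fin
  · intro k
    have r1 := tailSum_eq_add_tailSum_add_one hd (k - 1)
    rw [sub_add_cancel] at r1
    simp only [add_sub_cancel_right, hd']
    linear_combination r1 / 2 + tailSum_eq_add_tailSum_add_one hd k / 2
      + tailSum_eq_add_tailSum_add_one hcd k
  · have hshift : Tendsto (fun k : ℤ => k - 1) atTop atTop :=
      tendsto_atTop_add_const_right _ (-1) tendsto_id
    filter_upwards [tailSum_eventually_atTop hd, hshift.eventually (tailSum_eventually_atTop hd),
      hshift.eventually (he.eventually_cofinite.filter_mono atTop_le_cofinite),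
      tailSum_eventually_atTop hcd] with k h1 h2 h3 h4
    simp [h1, h2, h3, h4]

theorem tsum_interaction_laxFriedrichs (ha : HasFiniteSupport a) (hb : HasFiniteSupport b)
    (hd : HasFiniteSupport d) (he : HasFiniteSupport e) (hca : HasFiniteSupport ca)
    (hcd : HasFiniteSupport cd)
    (ha' : ∀ k, a' k = (a (k - 1) + a k) / 2 - x / 2 * (b k - b (k - 1)) + ca k)
    (hd' : ∀ k, d' k = (d (k - 1) + d k) / 2 - x / 2 * (e k - e (k - 1)) + cd k) :
    x / 2 * ∑' k, (a k * e k - d k * b k)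
      = -∑' k, cd k * headSum a' k - ∑' k, ca k * ((tailSum d (k - 1) + tailSum d k) / 2)
        + ∑' k, a' k * tailSum d' k - ∑' k, a k * tailSum d k
        + (x ^ 2 / 4 * ∑' k, e (k - 1) * (b k - b (k - 1))
          - x / 4 * ∑' k, b k * (d k - d (k - 1))
          - 1 / 4 * ∑' k, (d (k - 1) + x * e (k - 1)) * (a k - a (k - 1))
          - x / 2 * ∑' k, e (k - 1) * ca k) := by
  have ha'_fin : HasFiniteSupport a' := by
    rw [funext ha']; fun_prop (disch := first | simp | exact sub_left_injective)
  rw [← tsum_mul_tailSum ha'_fin hcd]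
  have hsum (f : ℤ → ℝ) (hf : HasFiniteSupport f) : HasSum f (∑' k, f k) := hf.summable.hasSum
  -- Once `a'`, the tail of `d'` and `tailSum d (k - 1) = d (k - 1) + tailSum d k` are substituted,
  -- the summand of the whole identity is `G k - G (k - 1)` for this `G`.
  have hG : HasFiniteSupport fun k =>
      a k * ((tailSum d k + x * e k) / 2) + b k * (x * (2 * tailSum d k - d k) / 4) := by
    fun_prop
  have key := (((((((((hsum (fun k => a k * e k - d k * b k) (by fun_prop)).mul_left (x / 2)).add
    (hsum (fun k => a' k * tailSum cd k) (by fun_prop))).add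
    (hsum (fun k => ca k * ((tailSum d (k - 1) + tailSum d k) / 2)) (by fun_prop))).sub
    (hsum (fun k => a' k * tailSum d' k) (by fun_prop))).add
    (hsum (fun k => a k * tailSum d k) (by fun_prop))).sub
    ((hsum (fun k => e (k - 1) * (b k - b (k - 1)))
      (by fun_prop (disch := first | simp | exact sub_left_injective))).mul_left (x ^ 2 / 4))).add
    ((hsum (fun k => b k * (d k - d (k - 1))) (by fun_prop)).mul_left (x / 4))).add
    ((hsum (fun k => (d (k - 1) + x * e (k - 1)) * (a k - a (k - 1)))
      (by fun_prop (disch := first | simp | exact sub_left_injective))).mul_left (1 / 4))).add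
    ((hsum (fun k => e (k - 1) * ca k)
      (by fun_prop (disch := first | simp | exact sub_left_injective))).mul_left (x / 2))
    |>.unique (hasSum_zero_of_eq_sub_shift hG fun k => ?_)
  · linear_combination key
  · have r := tailSum_eq_add_tailSum_add_one hd (k - 1)
    rw [sub_add_cancel] at r
    rw [tailSum_laxFriedrichs hd he hcd hd' k, ha' k, r]
    ring

end LaxFriedrichs

theorem tsum_ite_even (F : ℤ → ℝ) (c : ℤ) :
    ∑' j, (if Even (j + c) then F j else 0) = ∑' k, F (2 * k - c) := by
  rw [← (injective_two_mul_sub c).tsum_eq]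
  · exact tsum_congr fun k => if_pos ⟨k, by ring⟩
  · intro j hj
    obtain ⟨r, hr⟩ : Even (j + c) := by by_contra h; exact hj (if_neg h)
    exact ⟨r, by simp only; omega⟩

theorem tsum_ite_odd (F : ℤ → ℝ) (c : ℤ) :
    ∑' j, (if Odd (j + c) then F j else 0) = ∑' k, F (2 * k - (c + 1)) := by
  rw [← tsum_ite_even]
  refine tsum_congr fun j => if_congr ?_ rfl rfl
  rw [← add_assoc, Int.even_add_one, Int.not_even_iff_odd]

theorem tsum_ite_even_and_ge (F : ℤ → ℝ) (c k : ℤ) :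
    ∑' l, (if Even (l + c) ∧ 2 * k - c ≤ l then F l else 0)
      = tailSum (fun m => F (2 * m - c)) k := by
  simp_rw [ite_and]
  rw [tsum_ite_even]
  exact tsum_congr fun m => if_congr (by omega) rfl rfl

theorem tsum_ite_even_and_le (F : ℤ → ℝ) (c k : ℤ) :
    ∑' l, (if Even (l + c) ∧ l ≤ 2 * k - c then F l else 0)
      = headSum (fun m => F (2 * m - c)) k := by
  simp_rw [ite_and]
  rw [tsum_ite_even]
  exact tsum_congr fun m => if_congr (by omega) rfl rfl

theorem calD_two_mul_sub (dx : ℝ) (D : ℤ → ℕ → ℝ) (n : ℕ) (k : ℤ) :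
    calD dx D n (2 * k - n) = dx * tailSum (fun m => D (2 * m - n) n) k := by
  rw [calD, tsum_ite_even_and_ge (D · n)]

theorem calA_two_mul_sub (dx : ℝ) (A : ℤ → ℕ → ℝ) (n : ℕ) (k : ℤ) :
    calA dx A n (2 * k - n) = dx * headSum (fun m => A (2 * m - n) n) k := by
  rw [calA, tsum_ite_even_and_le (A · n)]

theorem interI_eq_tsum_mul_tailSum (dx : ℝ) (A D : ℤ → ℕ → ℝ) (n : ℕ)
    (hA : HasFiniteSupport (A · n)) (hD : HasFiniteSupport (D · n)) :
    interI dx A D n = dx ^ 2 * ∑' k, A (2 * k - n) n * tailSum (fun m => D (2 * m - n) n) k := by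
  have hrow (j : ℤ) : ∑' l, (if Even (j + (n : ℤ)) ∧ Even (l + (n : ℤ)) ∧ j ≤ l
      then A j n * D l n else 0)
      = if Even (j + (n : ℤ)) then A j n * ∑' l, (if Even (l + (n : ℤ)) ∧ j ≤ l then D l n else 0)
        else 0 := by
    split_ifs with hj
    · simp only [hj, true_and, ← tsum_mul_left, mul_ite, mul_zero]
    · simp [hj]
  rw [interI, Summable.tsum_prod]
  · dsimp only
    rw [tsum_congr hrow, tsum_ite_even]
    simp_rw [tsum_ite_even_and_ge]
  · refine HasFiniteSupport.summable ((hA.prod hD).subset fun p hp => ?_)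
    exact Set.mem_prod.2 ⟨fun h => hp (by simp [h]), fun h => hp (by simp [h])⟩

theorem interI_succ_sub_interI {dx dt : ℝ} (hdx : dx ≠ 0) (hdt : dt ≠ 0) (n : ℕ)
    {A B D E CA CD : ℤ → ℕ → ℝ} (hA₀ : ∀ m, HasFiniteSupport (A · m))
    (hB₀ : HasFiniteSupport (B · n)) (hD₀ : ∀ m, HasFiniteSupport (D · m))
    (hE₀ : HasFiniteSupport (E · n)) (hCA₀ : HasFiniteSupport (CA · n))
    (hCD₀ : HasFiniteSupport (CD · n))
    (hA : ∀ j : ℤ, Odd (j + (n : ℤ)) →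
      A j (n + 1) - (A (j - 1) n + A (j + 1) n) / 2
        + dt / dx / 2 * (B (j + 1) n - B (j - 1) n) = CA j n)
    (hD : ∀ j : ℤ, Odd (j + (n : ℤ)) →
      D j (n + 1) - (D (j - 1) n + D (j + 1) n) / 2
        + dt / dx / 2 * (E (j + 1) n - E (j - 1) n) = CD j n) :
    interI dx A D (n + 1) - interI dx A D n
      = 1 / 2 * dt * dx * ∑' j : ℤ,
          (if Even (j + (n : ℤ)) then A j n * E j n - D j n * B j n else 0)
        + dx * ∑' j : ℤ, (if Odd (j + (n : ℤ)) then CD j n * calA dx A (n + 1) j else 0)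
        + dx * ∑' j : ℤ, (if Odd (j + (n : ℤ)) then
            CA j n * ((calD dx D n (j - 1) + calD dx D n (j + 1)) / 2) else 0)
        - (dt / dx / 4 * (dt * dx) * ∑' j : ℤ,
              (if Odd (j + (n : ℤ)) then E (j - 1) n * (B (j + 1) n - B (j - 1) n) else 0)
          - 1 / 4 * (dt * dx) * ∑' j : ℤ,
              (if Odd (j + (n : ℤ)) then B (j + 1) n * (D (j + 1) n - D (j - 1) n) else 0)
          - 1 / (4 * (dt / dx)) * (dt * dx) * ∑' j : ℤ,
              (if Odd (j + (n : ℤ)) then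
                (D (j - 1) n + dt / dx * E (j - 1) n) * (A (j + 1) n - A (j - 1) n) else 0)
          - 1 / 2 * (dt * dx) * ∑' j : ℤ,
              (if Odd (j + (n : ℤ)) then E (j - 1) n * CA j n else 0)) := by
  obtain ⟨x, rfl⟩ : ∃ x, dt = x * dx := ⟨dt / dx, by field_simp⟩
  have hx : x ≠ 0 := left_ne_zero_of_mul hdt
  simp only [mul_div_cancel_right₀ _ hdx] at hA hD ⊢
  have hsucc : ∀ k : ℤ, 2 * k - ((n : ℤ) + 1) + 1 = 2 * k - n := fun k => by ring
  have hpred : ∀ k : ℤ, 2 * k - ((n : ℤ) + 1) - 1 = 2 * (k - 1) - n := fun k => by ring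
  have hcalA := calA_two_mul_sub dx A (n + 1)
  have hI := interI_eq_tsum_mul_tailSum dx A D (n + 1) (hA₀ _) (hD₀ _)
  push_cast at hcalA hI
  rw [hI, interI_eq_tsum_mul_tailSum dx A D n (hA₀ _) (hD₀ _), tsum_ite_even]
  simp only [tsum_ite_odd, hsucc, hpred, hcalA, calD_two_mul_sub]
  -- pull the factor `dx` of `𝒜` and `𝒟` out of the sums
  simp only [← mul_add, mul_div_assoc, mul_left_comm _ dx, tsum_mul_left]
  have hodd (k : ℤ) : Odd (2 * k - ((n : ℤ) + 1) + n) := ⟨k - 1, by ring⟩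
  have core := tsum_interaction_laxFriedrichs (x := x)
    (a := fun k => A (2 * k - n) n) (b := fun k => B (2 * k - n) n)
    (d := fun k => D (2 * k - n) n) (e := fun k => E (2 * k - n) n)
    (ca := fun k => CA (2 * k - (n + 1)) n) (cd := fun k => CD (2 * k - (n + 1)) n)
    (a' := fun k => A (2 * k - (n + 1)) (n + 1)) (d' := fun k => D (2 * k - (n + 1)) (n + 1))
    ((hA₀ n).comp_two_mul_sub _) (hB₀.comp_two_mul_sub _) ((hD₀ n).comp_two_mul_sub _)
    (hE₀.comp_two_mul_sub _) (hCA₀.comp_two_mul_sub _) (hCD₀.comp_two_mul_sub _)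
    (fun k => by have := hA _ (hodd k); rw [hsucc, hpred] at this; linarith)
    (fun k => by have := hD _ (hodd k); rw [hsucc, hpred] at this; linarith)
  beta_reduce at core
  have hcoef : 1 / (4 * x) * (x * dx * dx) = dx ^ 2 / 4 := by field_simp
  rw [hcoef]
  linear_combination -dx ^ 2 * core

theorem stmt11 (dx dt : ℝ) (hdx : 0 < dx) (hdt : 0 < dt) (N : ℕ)
    (A B D E CA CD : ℤ → ℕ → ℝ) (J : ℕ)
    (hsupp : ∀ (n : ℕ) (j : ℤ), (J : ℤ) < |j| →
      A j n = 0 ∧ B j n = 0 ∧ D j n = 0 ∧ E j n = 0 ∧ CA j n = 0 ∧ CD j n = 0)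
    (hA : ∀ n : ℕ, n ≤ N → ∀ j : ℤ, Odd (j + (n : ℤ)) →
      A j (n + 1) - (A (j - 1) n + A (j + 1) n) / 2
        + dt / dx / 2 * (B (j + 1) n - B (j - 1) n) = CA j n)
    (hD : ∀ n : ℕ, n ≤ N → ∀ j : ℤ, Odd (j + (n : ℤ)) →
      D j (n + 1) - (D (j - 1) n + D (j + 1) n) / 2
        + dt / dx / 2 * (E (j + 1) n - E (j - 1) n) = CD j n) :
    1 / 2 * dt * dx * ∑ n ∈ Finset.range (N + 1), ∑' j : ℤ,
        (if Even (j + (n : ℤ)) then A j n * E j n - D j n * B j n else 0)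
      = -(dx * ∑ n ∈ Finset.range (N + 1), ∑' j : ℤ,
            (if Odd (j + (n : ℤ)) then CD j n * calA dx A (n + 1) j else 0))
        - dx * ∑ n ∈ Finset.range (N + 1), ∑' j : ℤ,
            (if Odd (j + (n : ℤ)) then
              CA j n * ((calD dx D n (j - 1) + calD dx D n (j + 1)) / 2) else 0)
        + interI dx A D (N + 1) - interI dx A D 0
        + (dt / dx / 4 * (dt * dx) * ∑ n ∈ Finset.range (N + 1), ∑' j : ℤ,
              (if Odd (j + (n : ℤ)) then E (j - 1) n * (B (j + 1) n - B (j - 1) n) else 0)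
          - 1 / 4 * (dt * dx) * ∑ n ∈ Finset.range (N + 1), ∑' j : ℤ,
              (if Odd (j + (n : ℤ)) then B (j + 1) n * (D (j + 1) n - D (j - 1) n) else 0)
          - 1 / (4 * (dt / dx)) * (dt * dx) * ∑ n ∈ Finset.range (N + 1), ∑' j : ℤ,
              (if Odd (j + (n : ℤ)) then
                (D (j - 1) n + dt / dx * E (j - 1) n) * (A (j + 1) n - A (j - 1) n) else 0)
          - 1 / 2 * (dt * dx) * ∑ n ∈ Finset.range (N + 1), ∑' j : ℤ,
              (if Odd (j + (n : ℤ)) then E (j - 1) n * CA j n else 0)) := by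
  have hfin (F : ℤ → ℕ → ℝ) (hF : ∀ n j, (J : ℤ) < |j| → F j n = 0) (n : ℕ) :
      HasFiniteSupport (F · n) :=
    hasFiniteSupport_of_abs_lt (hF n)
  have hstep (n : ℕ) (hn : n ∈ Finset.range (N + 1)) :=
    interI_succ_sub_interI hdx.ne' hdt.ne' n
      (hfin A fun n j h => (hsupp n j h).1) (hfin B (fun n j h => (hsupp n j h).2.1) n)
      (hfin D fun n j h => (hsupp n j h).2.2.1) (hfin E (fun n j h => (hsupp n j h).2.2.2.1) n)
      (hfin CA (fun n j h => (hsupp n j h).2.2.2.2.1) n)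
      (hfin CD (fun n j h => (hsupp n j h).2.2.2.2.2) n)
      (hA n (Finset.mem_range_succ_iff.1 hn)) (hD n (Finset.mem_range_succ_iff.1 hn))
  have htel := Finset.sum_range_sub (interI dx A D) (N + 1)
  rw [Finset.sum_congr rfl hstep] at htel
  simp only [Finset.sum_add_distrib, Finset.sum_sub_distrib, ← Finset.mul_sum] at htel
  linear_combination htel
end
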